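/- Let n ≥ 1. There exist constants C, c > 0 such that for all x, y ∈ ℝⁿ and all t > 0, W_t^ℋ(x,y) ≤ C e^{−c|x−y|²/t} t^{−(n+1)/2} / (1 + |y|). -/

import Mathlib

/-! With `τ = tanh t`, Mehler's kernel is
`π^{-n/2} (2 sinh 2t)^{-n/2} exp(-(|x-y|²/τ + |x+y|² τ)/4)`.
Since `2|y| ≤ |x-y| + |x+y|`, the weight `1 + |y|` is absorbed by the Gaussian factors through
`s e^{-s²/r²} ≤ r`: as `τ ≤ 2t`, half of `e^{-|x-y|²/(4τ)}` pays `√t`, and `e^{-|x+y|² τ/4}` pays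
`1/√τ ≤ √((1+t)/t)`. This costs a factor `(1+t)/√t`, and `sinh 2t ≥ t eᵗ` gives the prefactor
the decay `t^{-n/2} e^{-t/2}`, which absorbs `1+t`. -/

open MeasureTheory Real Set

/-- The Hermite (Mehler) heat kernel on `ℝⁿ`. -/
noncomputable def hermiteHeat (n : ℕ) (t : ℝ) (x y : EuclideanSpace ℝ (Fin n)) : ℝ :=
  Real.pi ^ (-(n : ℝ) / 2) * (Real.exp (-(2 * t)) / (1 - Real.exp (-(4 * t)))) ^ ((n : ℝ) / 2) *
    Real.exp (-(1 / 4) * (‖x - y‖ ^ 2 * (1 + Real.exp (-(2 * t))) / (1 - Real.exp (-(2 * t)))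
      + ‖x + y‖ ^ 2 * (1 - Real.exp (-(2 * t))) / (1 + Real.exp (-(2 * t)))))

namespace Real

lemma tanh_eq_one_sub_exp_div (t : ℝ) :
    tanh t = (1 - exp (-(2 * t))) / (1 + exp (-(2 * t))) := by
  rw [tanh_eq, ← mul_div_mul_left _ _ (exp_pos (-t)).ne', mul_sub, mul_add, ← exp_add,
    ← exp_add, neg_add_cancel, exp_zero]
  ring_nf

lemma tanh_pos_of_pos {t : ℝ} (ht : 0 < t) : 0 < tanh t := by
  rw [tanh_eq_one_sub_exp_div]
  have : exp (-(2 * t)) < 1 := exp_lt_one_iff.mpr (by linarith)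
  exact div_pos (by linarith) (by positivity)

lemma tanh_le_two_mul {t : ℝ} (ht : 0 ≤ t) : tanh t ≤ 2 * t := by
  rw [tanh_eq_one_sub_exp_div]
  have h1 : exp (-(2 * t)) ≤ 1 := exp_le_one_iff.mpr (by linarith)
  have h2 := add_one_le_exp (-(2 * t))
  calc (1 - exp (-(2 * t))) / (1 + exp (-(2 * t))) ≤ 1 - exp (-(2 * t)) :=
        div_le_self (by linarith) (by linarith [exp_pos (-(2 * t))])
    _ ≤ 2 * t := by linarith

lemma div_one_add_le_tanh {t : ℝ} (ht : 0 ≤ t) : t / (1 + t) ≤ tanh t := by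
  rw [tanh_eq_one_sub_exp_div, div_le_div_iff₀ (by linarith) (by positivity)]
  -- i.e. `1 + 2 * t ≤ exp (2 * t)`
  have h := mul_le_mul_of_nonneg_left (add_one_le_exp (2 * t)) (exp_pos (-(2 * t))).le
  rw [← exp_add, neg_add_cancel, exp_zero] at h
  linarith

lemma mul_exp_le_sinh_two_mul {t : ℝ} (ht : 0 ≤ t) : t * exp t ≤ sinh (2 * t) := by
  have hsinh : t ≤ sinh t := self_le_sinh_iff.mpr ht
  have hcosh : exp t ≤ 2 * cosh t := by rw [cosh_eq]; linarith [exp_pos (-t)]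
  rw [sinh_two_mul, mul_comm 2 (sinh t), mul_assoc]
  exact mul_le_mul hsinh hcosh (exp_pos t).le (by linarith)

lemma one_add_mul_exp_neg_half_le (t : ℝ) : (1 + t) * exp (-(t / 2)) ≤ 2 := by
  have h := add_one_le_exp (t / 2)
  rw [← le_div_iff₀ (exp_pos _), exp_neg, div_inv_eq_mul]
  linarith

lemma mul_exp_neg_sq_div_sq_le (s : ℝ) {r : ℝ} (hr : 0 < r) : s * exp (-(s ^ 2 / r ^ 2)) ≤ r := by
  have key : s / r ≤ exp ((s / r) ^ 2) := by
    nlinarith [add_one_le_exp ((s / r) ^ 2), sq_nonneg (s / r - 1)]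
  rw [exp_neg, ← div_eq_mul_inv, div_le_iff₀ (exp_pos _), ← div_pow, ← div_le_iff₀' hr]
  exact key

end Real

lemma two_mul_norm_le_norm_sub_add_norm_add {E : Type*} [NormedAddCommGroup E] [NormedSpace ℝ E]
    (x y : E) : 2 * ‖y‖ ≤ ‖x - y‖ + ‖x + y‖ := by
  calc 2 * ‖y‖ = ‖(x + y) - (x - y)‖ := by
        rw [show (x + y) - (x - y) = (2 : ℝ) • y by module, norm_smul, Real.norm_eq_abs, abs_two]
    _ ≤ ‖x - y‖ + ‖x + y‖ := (norm_sub_le _ _).trans_eq (add_comm _ _)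

lemma one_add_add_mul_exp_neg_le {a b : ℝ} (ha : 0 < a) (hb : 0 < b) (u v : ℝ) :
    (1 + u + v) * (exp (-(u ^ 2 / a ^ 2)) * exp (-(v ^ 2 / b ^ 2))) ≤ 1 + a + b := by
  have hu := Real.mul_exp_neg_sq_div_sq_le u ha
  have hv := Real.mul_exp_neg_sq_div_sq_le v hb
  have hu1 : exp (-(u ^ 2 / a ^ 2)) ≤ 1 := exp_le_one_iff.mpr (neg_nonpos.mpr (by positivity))
  have hv1 : exp (-(v ^ 2 / b ^ 2)) ≤ 1 := exp_le_one_iff.mpr (neg_nonpos.mpr (by positivity))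
  have hu0 := exp_pos (-(u ^ 2 / a ^ 2))
  have hv0 := exp_pos (-(v ^ 2 / b ^ 2))
  nlinarith [mul_le_mul_of_nonneg_right hu hv0.le, mul_le_mul_of_nonneg_right hv hu0.le,
    mul_le_mul hu1 hv1 hv0.le zero_le_one]

lemma hermiteHeat_eq_sinh_tanh (n : ℕ) (t : ℝ) (x y : EuclideanSpace ℝ (Fin n)) :
    hermiteHeat n t x y = π ^ (-(n : ℝ) / 2) * (2 * sinh (2 * t))⁻¹ ^ ((n : ℝ) / 2) *
      exp (-(1 / 4) * (‖x - y‖ ^ 2 / tanh t + ‖x + y‖ ^ 2 * tanh t)) := by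
  have hfactor : 1 - exp (-(4 * t)) = exp (-(2 * t)) * (2 * sinh (2 * t)) := by
    rw [sinh_eq, mul_div_cancel₀ _ two_ne_zero, mul_sub, ← exp_add, ← exp_add, neg_add_cancel,
      exp_zero]
    ring_nf
  rw [hermiteHeat, hfactor, div_mul_cancel_left₀ (exp_pos _).ne', tanh_eq_one_sub_exp_div,
    div_div_eq_mul_div, ← mul_div_assoc]

lemma pi_rpow_mul_inv_two_mul_sinh_rpow_le {n : ℕ} (hn : 1 ≤ n) {t : ℝ} (ht : 0 < t) :
    π ^ (-(n : ℝ) / 2) * (2 * sinh (2 * t))⁻¹ ^ ((n : ℝ) / 2)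
      ≤ t ^ (-(n : ℝ) / 2) * exp (-(t / 2)) := by
  have hn' : (1 : ℝ) ≤ n := by exact_mod_cast hn
  have hpi : π ^ (-(n : ℝ) / 2) ≤ 1 :=
    rpow_le_one_of_one_le_of_nonpos (by linarith [pi_gt_three]) (by linarith)
  have hsinh : (2 * sinh (2 * t))⁻¹ ≤ (t * exp t)⁻¹ := by
    have := mul_exp_le_sinh_two_mul ht.le
    exact inv_anti₀ (by positivity) (by linarith [mul_pos ht (exp_pos t)])
  calc π ^ (-(n : ℝ) / 2) * (2 * sinh (2 * t))⁻¹ ^ ((n : ℝ) / 2)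
      ≤ 1 * (t * exp t)⁻¹ ^ ((n : ℝ) / 2) := by gcongr
    _ = t ^ (-(n : ℝ) / 2) * exp (-(t * n / 2)) := by
        rw [one_mul, mul_inv, mul_rpow (by positivity) (by positivity), inv_rpow ht.le,
          ← rpow_neg ht.le, ← exp_neg, ← exp_mul, neg_div]
        ring_nf
    _ ≤ t ^ (-(n : ℝ) / 2) * exp (-(t / 2)) := by
        gcongr
        nlinarith

lemma one_add_add_div_sqrt_le {t τ : ℝ} (ht : 0 < t) (hτ : t / (1 + t) ≤ τ) :
    1 + 4 * √t + 2 / √τ ≤ 7 * (1 + t) / √t := by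
  have hτ0 : 0 < τ := (div_pos ht (by linarith)).trans_le hτ
  obtain ⟨s, hs, rfl⟩ : ∃ s, 0 < s ∧ s ^ 2 = t := ⟨√t, sqrt_pos.mpr ht, sq_sqrt ht.le⟩
  obtain ⟨r, hr, rfl⟩ : ∃ r, 0 < r ∧ r ^ 2 = τ := ⟨√τ, sqrt_pos.mpr hτ0, sq_sqrt hτ0.le⟩
  rw [sqrt_sq hs.le, sqrt_sq hr.le, le_div_iff₀ hs]
  have hsr : s ≤ r * (1 + s ^ 2) := by
    rw [div_le_iff₀ (by positivity)] at hτ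
    nlinarith [sq_nonneg s, mul_pos hr hs]
  have h2 : 2 / r * s ≤ 2 * (1 + s ^ 2) := by
    rw [div_mul_eq_mul_div, div_le_iff₀ hr]; nlinarith
  nlinarith [sq_nonneg (s - 1)]

lemma pi_rpow_mul_inv_two_mul_sinh_rpow_mul_le {n : ℕ} (hn : 1 ≤ n) {t τ : ℝ} (ht : 0 < t)
    (hτ : t / (1 + t) ≤ τ) :
    π ^ (-(n : ℝ) / 2) * (2 * sinh (2 * t))⁻¹ ^ ((n : ℝ) / 2) * (1 + 4 * √t + 2 / √τ)
      ≤ 14 * t ^ (-((n : ℝ) + 1) / 2) := by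
  have hpow : t ^ (-(n : ℝ) / 2) / √t = t ^ (-((n : ℝ) + 1) / 2) := by
    rw [sqrt_eq_rpow, ← rpow_sub ht]; ring_nf
  calc π ^ (-(n : ℝ) / 2) * (2 * sinh (2 * t))⁻¹ ^ ((n : ℝ) / 2) * (1 + 4 * √t + 2 / √τ)
      ≤ t ^ (-(n : ℝ) / 2) * exp (-(t / 2)) * (7 * (1 + t) / √t) :=
        mul_le_mul (pi_rpow_mul_inv_two_mul_sinh_rpow_le hn ht) (one_add_add_div_sqrt_le ht hτ)
          (by positivity) (by positivity)
    _ = 7 * ((1 + t) * exp (-(t / 2))) * (t ^ (-(n : ℝ) / 2) / √t) := by ring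
    _ ≤ 14 * t ^ (-((n : ℝ) + 1) / 2) := by
        rw [hpow]
        nlinarith [one_add_mul_exp_neg_half_le t, rpow_pos_of_pos ht (-((n : ℝ) + 1) / 2)]

lemma exp_neg_mul_one_add_norm_le {E : Type*} [NormedAddCommGroup E] [NormedSpace ℝ E]
    {t τ : ℝ} (ht : 0 < t) (hτ0 : 0 < τ) (hτt : τ ≤ 2 * t) (x y : E) :
    exp (-(1 / 4) * (‖x - y‖ ^ 2 / τ + ‖x + y‖ ^ 2 * τ)) * (1 + ‖y‖)
      ≤ exp (-(‖x - y‖ ^ 2 / (16 * t))) * (1 + 4 * √t + 2 / √τ) := by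
  have hy : 1 + ‖y‖ ≤ 1 + ‖x - y‖ + ‖x + y‖ := by
    linarith [two_mul_norm_le_norm_sub_add_norm_add x y, norm_nonneg y]
  set u := ‖x - y‖
  set v := ‖x + y‖
  have hu : u ^ 2 / (2 * t) ≤ u ^ 2 / τ := div_le_div_of_nonneg_left (sq_nonneg u) hτ0 hτt
  have hsplit : exp (-(1 / 4) * (u ^ 2 / τ + v ^ 2 * τ))
      ≤ exp (-(u ^ 2 / (16 * t)))
        * (exp (-(u ^ 2 / (4 * √t) ^ 2)) * exp (-(v ^ 2 / (2 / √τ) ^ 2))) := by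
    rw [mul_pow, div_pow, sq_sqrt ht.le, sq_sqrt hτ0.le, ← exp_add, ← exp_add, exp_le_exp]
    have h16 : u ^ 2 / (4 ^ 2 * t) = u ^ 2 / (16 * t) := by norm_num
    have h2t : u ^ 2 / (2 * t) = 2 * (u ^ 2 / (16 * t)) * 4 := by field_simp; ring
    have hτ4 : v ^ 2 / (2 ^ 2 / τ) = v ^ 2 * τ / 4 := by field_simp; ring
    rw [h16, hτ4]
    linarith
  calc exp (-(1 / 4) * (u ^ 2 / τ + v ^ 2 * τ)) * (1 + ‖y‖)
      ≤ exp (-(u ^ 2 / (16 * t)))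
        * (exp (-(u ^ 2 / (4 * √t) ^ 2)) * exp (-(v ^ 2 / (2 / √τ) ^ 2))) * (1 + u + v) :=
        mul_le_mul hsplit hy (by positivity) (by positivity)
    _ = exp (-(u ^ 2 / (16 * t)))
        * ((1 + u + v) * (exp (-(u ^ 2 / (4 * √t) ^ 2)) * exp (-(v ^ 2 / (2 / √τ) ^ 2)))) := by
        ring
    _ ≤ exp (-(u ^ 2 / (16 * t))) * (1 + 4 * √t + 2 / √τ) := by
        gcongr
        exact one_add_add_mul_exp_neg_le (by positivity) (by positivity) u v

theorem hermiteHeat_mul_one_add_norm_le {n : ℕ} (hn : 1 ≤ n) {t : ℝ} (ht : 0 < t)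
    (x y : EuclideanSpace ℝ (Fin n)) :
    hermiteHeat n t x y * (1 + ‖y‖)
      ≤ 14 * exp (-(‖x - y‖ ^ 2 / (16 * t))) * t ^ (-((n : ℝ) + 1) / 2) := by
  rw [hermiteHeat_eq_sinh_tanh]
  set P := π ^ (-(n : ℝ) / 2) * (2 * sinh (2 * t))⁻¹ ^ ((n : ℝ) / 2)
  have hP : 0 ≤ P := by positivity
  calc P * exp (-(1 / 4) * (‖x - y‖ ^ 2 / tanh t + ‖x + y‖ ^ 2 * tanh t)) * (1 + ‖y‖)
      = P * (exp (-(1 / 4) * (‖x - y‖ ^ 2 / tanh t + ‖x + y‖ ^ 2 * tanh t)) * (1 + ‖y‖)) := by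
        ring
    _ ≤ P * (exp (-(‖x - y‖ ^ 2 / (16 * t))) * (1 + 4 * √t + 2 / √(tanh t))) :=
        mul_le_mul_of_nonneg_left (exp_neg_mul_one_add_norm_le ht (tanh_pos_of_pos ht)
          (tanh_le_two_mul ht.le) x y) hP
    _ = exp (-(‖x - y‖ ^ 2 / (16 * t))) * (P * (1 + 4 * √t + 2 / √(tanh t))) := by ring
    _ ≤ exp (-(‖x - y‖ ^ 2 / (16 * t))) * (14 * t ^ (-((n : ℝ) + 1) / 2)) :=
        mul_le_mul_of_nonneg_left
          (pi_rpow_mul_inv_two_mul_sinh_rpow_mul_le hn ht (div_one_add_le_tanh ht.le))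
          (exp_pos _).le
    _ = 14 * exp (-(‖x - y‖ ^ 2 / (16 * t))) * t ^ (-((n : ℝ) + 1) / 2) := by ring

/-- there exist `C, c > 0` with
`W_t^ℋ(x,y) ≤ C e^{−c|x−y|²/t} t^{−(n+1)/2} / (1 + |y|)` for all `x, y ∈ ℝⁿ`, `t > 0`. -/
theorem statement10 (n : ℕ) (hn : 1 ≤ n) :
    ∃ C > (0 : ℝ), ∃ c > (0 : ℝ), ∀ (x y : EuclideanSpace ℝ (Fin n)) (t : ℝ), 0 < t →
      hermiteHeat n t x y
        ≤ C * Real.exp (-(c * ‖x - y‖ ^ 2 / t)) * t ^ (-((n : ℝ) + 1) / 2) / (1 + ‖y‖) := by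
  refine ⟨14, by norm_num, 1 / 16, by norm_num, fun x y t ht => ?_⟩
  rw [le_div_iff₀ (by positivity), show 1 / 16 * ‖x - y‖ ^ 2 / t = ‖x - y‖ ^ 2 / (16 * t) by ring]
  exact hermiteHeat_mul_one_add_norm_le hn ht x y
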